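/- Let K ⊆ 2^Q for a finite Q, and let R be the set of all implicates of K. Then K(R) is the unique minimal union-closed family (containing ∅) that contains K ∪ {∅}; in particular, if K is union-closed with ∅ ∈ K, then K = K(R). -/

import Mathlib

/-! Every element `q` of a set `X ∈ K(R)`, with `R` the implicates of `K`, lies in some `Y ∈ K`
with `Y ⊆ X`: otherwise `(Xᶜ, q)` would be an implicate of `K` rejected by `X`. Hence `X` is a
union of members of `K`, so it belongs to every union-closed family containing `K ∪ {∅}`, while
`K(R)` is itself such a family. -/

variable {α : Type*} [DecidableEq α] [Fintype α]

/-- A family of subsets is union-closed. -/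
def UnionClosed (K : Set (Finset α)) : Prop :=
  ∀ X ∈ K, ∀ Y ∈ K, X ∪ Y ∈ K

/-- There is a tight path in `K` from `S` to `T`: a chain of members of `K`
each obtained from the previous by adding exactly one element. -/
def TightPath (K : Set (Finset α)) (S T : Finset α) : Prop :=
  ∃ (k : ℕ) (Y : ℕ → Finset α), Y 0 = S ∧ Y k = T ∧ (∀ i ≤ k, Y i ∈ K) ∧
    ∀ i < k, Y i ⊆ Y (i + 1) ∧ (Y (i + 1) \ Y i).card = 1

/-- The family of members of `K` reachable from `∅` by a tight path in `K`. -/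
def checkFam (K : Set (Finset α)) : Set (Finset α) :=
  {X | X ∈ K ∧ TightPath K ∅ X}

/-- Accessibility: every nonempty member can lose some element and stay in the family. -/
def Accessible (K : Set (Finset α)) : Prop :=
  ∀ X ∈ K, X ≠ ∅ → ∃ x ∈ X, X.erase x ∈ K

/-- An antimatroid: contains `∅`, union-closed, and accessible. -/
def IsAntimatroid (K : Set (Finset α)) : Prop :=
  ∅ ∈ K ∧ UnionClosed K ∧ Accessible K

/-- A Horn rule `(A, q)` accepts `X` if `q ∈ X` implies `X ∩ A ≠ ∅`. -/
def Accepts (r : Finset α × α) (X : Finset α) : Prop :=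
  r.2 ∈ X → (X ∩ r.1).Nonempty

/-- The union-closed family determined by a set of Horn rules. -/
def KFam (R : Set (Finset α × α)) : Set (Finset α) :=
  {X | ∀ r ∈ R, Accepts r X}

/-- The maximal antimatroid contained in `KFam R`. -/
def AFam (R : Set (Finset α × α)) : Set (Finset α) :=
  checkFam (KFam R)

/-- A rule is an implicate of a family if it accepts every member. -/
def Implicate (K : Set (Finset α)) (r : Finset α × α) : Prop :=
  ∀ X ∈ K, Accepts r X

lemma empty_mem_KFam {β : Type*} [DecidableEq β] (R : Set (Finset β × β)) : ∅ ∈ KFam R :=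
  fun _ _ hq => absurd hq (Finset.notMem_empty _)

lemma unionClosed_KFam {β : Type*} [DecidableEq β] (R : Set (Finset β × β)) :
    UnionClosed (KFam R) := by
  intro X hX Y hY r hr hq
  rcases Finset.mem_union.1 hq with hqX | hqY
  · exact (hX r hr hqX).mono (Finset.inter_subset_inter_right Finset.subset_union_left)
  · exact (hY r hr hqY).mono (Finset.inter_subset_inter_right Finset.subset_union_right)

lemma subset_KFam_implicates {β : Type*} [DecidableEq β] (K : Set (Finset β)) :
    K ⊆ KFam {r | Implicate K r} :=
  fun _ hX _ hr => hr _ hX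

lemma accepts_compl_iff {X Y : Finset α} {q : α} :
    Accepts (Xᶜ, q) Y ↔ (q ∈ Y → ¬Y ⊆ X) := by
  rw [Accepts, ← Finset.not_disjoint_iff_nonempty_inter, disjoint_compl_right_iff]

lemma exists_mem_subset_of_mem_KFam_implicates {K : Set (Finset α)} {X : Finset α} {q : α}
    (hX : X ∈ KFam {r | Implicate K r}) (hq : q ∈ X) : ∃ Y ∈ K, q ∈ Y ∧ Y ⊆ X := by
  by_contra! hnone
  have himp : Implicate K (Xᶜ, q) := fun Y hY => accepts_compl_iff.2 (hnone Y hY)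
  exact accepts_compl_iff.1 (hX _ himp) hq subset_rfl

lemma KFam_implicates_subset {K M : Set (Finset α)} (hM : ∅ ∈ M) (hMuc : UnionClosed M)
    (hKM : K ⊆ M) : KFam {r | Implicate K r} ⊆ M := by
  classical
  intro X hX
  let below : Finset (Finset α) := {Y | Y ∈ K ∧ Y ⊆ X}
  have hX_eq : below.sup id = X := by
    refine le_antisymm (Finset.sup_le fun Y hY => (Finset.mem_filter.1 hY).2.2) fun q hq => ?_
    obtain ⟨Y, hYK, hqY, hYX⟩ := exists_mem_subset_of_mem_KFam_implicates hX hq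
    exact Finset.mem_sup.2 ⟨Y, Finset.mem_filter.2 ⟨Finset.mem_univ _, hYK, hYX⟩, hqY⟩
  rw [← hX_eq]
  exact Finset.sup_mem M hM hMuc below id fun Y hY => hKM (Finset.mem_filter.1 hY).2.1

theorem stmt18 (K : Set (Finset α)) :
    (∅ ∈ KFam {r : Finset α × α | Implicate K r} ∧
     UnionClosed (KFam {r : Finset α × α | Implicate K r}) ∧
     K ⊆ KFam {r : Finset α × α | Implicate K r} ∧
     ∀ M : Set (Finset α), ∅ ∈ M → UnionClosed M → K ⊆ M →
       KFam {r : Finset α × α | Implicate K r} ⊆ M) ∧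
    ((∅ ∈ K ∧ UnionClosed K) → K = KFam {r : Finset α × α | Implicate K r}) :=
  ⟨⟨empty_mem_KFam _, unionClosed_KFam _, subset_KFam_implicates K,
      fun _ hM hMuc hKM => KFam_implicates_subset hM hMuc hKM⟩,
    fun ⟨hK, hKuc⟩ => (subset_KFam_implicates K).antisymm (KFam_implicates_subset hK hKuc le_rfl)⟩
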